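/- Let p > 1 and let F : 𝔻 → ℂ be a smooth (C¹) function with β₂(F) := sup_{z∈𝔻} (1−|z|²)√(|J_F(z)|) < ∞ (i.e. F ∈ 𝔅𝒯). Then for every a ∈ 𝔻, ∫_𝔻 |J_F(z)| (1−|φ_a(z)|²)^p dA(z) ≤ β₂(F)² ∫_𝔻 (1−|ζ|²)^{p−2} dA(ζ) < ∞; in particular 𝔅𝒯 ⊆ 𝒬𝒯_p for all p > 1. -/

import Mathlib

open MeasureTheory Metric Complex Set Filter Topology

noncomputable section

/-- The open unit disk in the complex plane. -/
def unitDisk : Set ℂ := Metric.ball 0 1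

/-- The disk automorphism `φ_a(z) = (a - z)/(1 - conj a · z)`. -/
def moebius (a z : ℂ) : ℂ := (a - z) / (1 - (starRingEnd ℂ) a * z)

/-- The pre-Schwarzian derivative `h''/h'` of an analytic function. -/
def preSchwarz (h : ℂ → ℂ) (z : ℂ) : ℂ := deriv (deriv h) z / deriv h z

/-- The Schwarzian derivative `(h''/h')' - (1/2)(h''/h')²` of an analytic function. -/
def schwarz (h : ℂ → ℂ) (z : ℂ) : ℂ :=
  deriv (preSchwarz h) z - (1 / 2) * preSchwarz h z ^ 2

/-- The (second complex) dilatation `w = g'/h'` of the harmonic map `f = h + conj g`. -/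
def dil (h g : ℂ → ℂ) (z : ℂ) : ℂ := deriv g z / deriv h z

/-- `F_z = h''/h' - w'·conj(w)/(1-|w|²)` for `F = log J_f`, `f = h + conj g`. -/
def FzLogJac (h g : ℂ → ℂ) (z : ℂ) : ℂ :=
  preSchwarz h z -
    deriv (dil h g) z * (starRingEnd ℂ) (dil h g z) / ((1 - ‖dil h g z‖ ^ 2 : ℝ) : ℂ)

/-- The harmonic Schwarzian derivative
`S_f = S_h + (conj w/(1-|w|²))(w'·h''/h' - w'') - (3/2)(w'·conj w/(1-|w|²))²`. -/
def harmSchwarz (h g : ℂ → ℂ) (z : ℂ) : ℂ :=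
  schwarz h z
    + ((starRingEnd ℂ) (dil h g z) / ((1 - ‖dil h g z‖ ^ 2 : ℝ) : ℂ))
        * (deriv (dil h g) z * preSchwarz h z - deriv (deriv (dil h g)) z)
    - (3 / 2) * (deriv (dil h g) z * (starRingEnd ℂ) (dil h g z)
        / ((1 - ‖dil h g z‖ ^ 2 : ℝ) : ℂ)) ^ 2

/-- `f = h + conj g` is a sense-preserving harmonic mapping on the unit disk:
`h, g` analytic on `𝔻` and `J_f = |h'|² - |g'|² > 0` on `𝔻`. -/
def SensePreserving (h g : ℂ → ℂ) : Prop :=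
  DifferentiableOn ℂ h unitDisk ∧ DifferentiableOn ℂ g unitDisk ∧
    ∀ z ∈ unitDisk, ‖deriv g z‖ < ‖deriv h z‖

/-- `f` is uniformly locally univalent on the unit disk: injective on every
pseudo-hyperbolic disk of some fixed radius `r < 1`. -/
def UnifLocUnivalent (f : ℂ → ℂ) : Prop :=
  ∃ r : ℝ, 0 < r ∧ r < 1 ∧ ∀ a ∈ unitDisk,
    Set.InjOn f {z | z ∈ unitDisk ∧ ‖(z - a) / (1 - (starRingEnd ℂ) a * z)‖ < r}

/-- The Wirtinger derivative `F_z = (1/2)(∂ₓF - i ∂_yF)` of a real-differentiable map. -/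
def wirtZ (F : ℂ → ℂ) (z : ℂ) : ℂ :=
  (1 / 2) * (fderiv ℝ F z 1 - Complex.I * fderiv ℝ F z Complex.I)

/-- The Wirtinger derivative `F_{z̄} = (1/2)(∂ₓF + i ∂_yF)` of a real-differentiable map. -/
def wirtZbar (F : ℂ → ℂ) (z : ℂ) : ℂ :=
  (1 / 2) * (fderiv ℝ F z 1 + Complex.I * fderiv ℝ F z Complex.I)

/-- The Jacobian `J_F = |F_z|² - |F_{z̄}|²` of a smooth map `F : 𝔻 → ℂ`. -/
def jac (F : ℂ → ℂ) (z : ℂ) : ℝ := ‖wirtZ F z‖ ^ 2 - ‖wirtZbar F z‖ ^ 2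

/-- `σ` is a holomorphic automorphism of the unit disk. -/
def DiskAut (σ : ℂ → ℂ) : Prop :=
  DifferentiableOn ℂ σ unitDisk ∧ Set.BijOn σ unitDisk unitDisk

/-- The function `h(z) = 2(1-z)^{-1/2}` (principal branch). -/
def hfun (w : ℂ) : ℂ := 2 * (1 - w) ^ (-(1 / 2) : ℂ)

/-! For `a ∈ 𝔻` the map `φ_a` is an involution of `𝔻`, holomorphic with real Jacobian `|φ_a'|²`,
and the Schwarz–Pick identity `(1 - |z|²)|φ_a'(z)| = 1 - |φ_a(z)|²` gives
`|J_F|(1 - |φ_a|²)^p = |J_F|(1 - |z|²)² · |φ_a'|²(1 - |φ_a|²)^(p-2)`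
`≤ β₂(F)² |φ_a'|²(1 - |φ_a|²)^(p-2)`.
Substituting `ζ = φ_a(z)` yields the bound. The weight `(1 - |ζ|²)^(p-2)` is radial, so its
integral over `𝔻` is finite iff `r (1 - r²)^(p-2)` is integrable on `(0, 1)`; for `p > 1` this
holds because the latter has the antiderivative `-(1 - r²)^(p-1) / (2(p-1))`, continuous on
`[0, 1]`. -/

open scoped ENNReal ComplexConjugate

theorem one_sub_conj_mul_ne_zero {a z : ℂ} (ha : ‖a‖ < 1) (hz : ‖z‖ < 1) :
    1 - conj a * z ≠ 0 := by
  rw [sub_ne_zero]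
  intro h
  have h1 := congrArg norm h
  rw [norm_one, norm_mul, Complex.norm_conj] at h1
  nlinarith [norm_nonneg a, norm_nonneg z]

theorem normSq_one_sub_conj_mul_sub_normSq_sub (a z : ℂ) :
    normSq (1 - conj a * z) - normSq (a - z) = (1 - normSq a) * (1 - normSq z) := by
  simp only [normSq_apply, sub_re, sub_im, mul_re, mul_im, conj_re, conj_im, one_re, one_im]
  ring

theorem one_sub_norm_moebius_sq {a z : ℂ} (ha : ‖a‖ < 1) (hz : ‖z‖ < 1) :
    1 - ‖moebius a z‖ ^ 2 = (1 - ‖a‖ ^ 2) * (1 - ‖z‖ ^ 2) / ‖1 - conj a * z‖ ^ 2 := by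
  have hd : ‖1 - conj a * z‖ ^ 2 ≠ 0 := by simpa using one_sub_conj_mul_ne_zero ha hz
  rw [moebius, norm_div, div_pow, eq_div_iff hd, sub_mul, div_mul_cancel₀ _ hd]
  simp only [Complex.sq_norm]
  linear_combination normSq_one_sub_conj_mul_sub_normSq_sub a z

theorem norm_moebius_lt_one {a z : ℂ} (ha : ‖a‖ < 1) (hz : ‖z‖ < 1) : ‖moebius a z‖ < 1 := by
  have h : 0 < 1 - ‖moebius a z‖ ^ 2 := by
    rw [one_sub_norm_moebius_sq ha hz]
    have := one_sub_conj_mul_ne_zero ha hz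
    have : 0 < 1 - ‖a‖ ^ 2 := by nlinarith [norm_nonneg a]
    have : 0 < 1 - ‖z‖ ^ 2 := by nlinarith [norm_nonneg z]
    positivity
  nlinarith [norm_nonneg (moebius a z)]

theorem moebius_moebius {a z : ℂ} (ha : ‖a‖ < 1) (hz : ‖z‖ < 1) :
    moebius a (moebius a z) = z := by
  have hd := one_sub_conj_mul_ne_zero ha hz
  rw [moebius, div_eq_iff (one_sub_conj_mul_ne_zero ha (norm_moebius_lt_one ha hz)), moebius]
  linear_combination (-1 : ℂ) * div_mul_cancel₀ (a - z) hd

theorem hasDerivAt_moebius {a z : ℂ} (ha : ‖a‖ < 1) (hz : ‖z‖ < 1) :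
    HasDerivAt (moebius a) ((normSq a - 1) / (1 - conj a * z) ^ 2) z := by
  have hd := one_sub_conj_mul_ne_zero ha hz
  refine (((hasDerivAt_id z).const_sub a).div
    (((hasDerivAt_id z).const_mul (conj a)).const_sub 1) hd).congr_deriv ?_
  rw [← Complex.mul_conj]
  simp only [id]
  ring

theorem one_sub_norm_sq_mul_norm_deriv_moebius {a z : ℂ} (ha : ‖a‖ < 1) (hz : ‖z‖ < 1) :
    (1 - ‖z‖ ^ 2) * ‖deriv (moebius a) z‖ = 1 - ‖moebius a z‖ ^ 2 := by
  have hd := one_sub_conj_mul_ne_zero ha hz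
  have hnum : ‖(normSq a : ℂ) - 1‖ = 1 - ‖a‖ ^ 2 := by
    rw [← Complex.sq_norm, ← Complex.ofReal_one, ← Complex.ofReal_sub,
      Complex.norm_real, Real.norm_eq_abs, abs_of_nonpos (by nlinarith [norm_nonneg a])]
    ring
  rw [(hasDerivAt_moebius ha hz).deriv, one_sub_norm_moebius_sq ha hz, norm_div, norm_pow, hnum]
  ring

theorem det_restrictScalars_toSpanSingleton (c : ℂ) :
    ((ContinuousLinearMap.toSpanSingleton ℂ c).restrictScalars ℝ).det = ‖c‖ ^ 2 := by
  simp [ContinuousLinearMap.det, LinearMap.det_restrictScalars, Algebra.norm_complex_apply,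
    Complex.sq_norm]

theorem lintegral_image_eq_lintegral_norm_deriv_sq_mul {s : Set ℂ} (hs : MeasurableSet s)
    {f f' : ℂ → ℂ} (hf' : ∀ x ∈ s, HasDerivWithinAt f (f' x) s x) (hf : InjOn f s)
    (g : ℂ → ℝ≥0∞) :
    ∫⁻ x in f '' s, g x = ∫⁻ x in s, ENNReal.ofReal (‖f' x‖ ^ 2) * g (f x) := by
  rw [lintegral_image_eq_lintegral_abs_det_fderiv_mul volume hs
    (fun x hx => ((hf' x hx).hasFDerivWithinAt.restrictScalars ℝ)) hf]
  simp only [det_restrictScalars_toSpanSingleton, abs_sq]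

theorem mem_unitDisk {z : ℂ} : z ∈ unitDisk ↔ ‖z‖ < 1 := mem_ball_zero_iff

theorem mapsTo_moebius_unitDisk {a : ℂ} (ha : a ∈ unitDisk) :
    MapsTo (moebius a) unitDisk unitDisk := fun _ hz =>
  mem_unitDisk.2 (norm_moebius_lt_one (mem_unitDisk.1 ha) (mem_unitDisk.1 hz))

theorem leftInvOn_moebius_unitDisk {a : ℂ} (ha : a ∈ unitDisk) :
    LeftInvOn (moebius a) (moebius a) unitDisk := fun _ hz =>
  moebius_moebius (mem_unitDisk.1 ha) (mem_unitDisk.1 hz)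

theorem bijOn_moebius_unitDisk {a : ℂ} (ha : a ∈ unitDisk) :
    BijOn (moebius a) unitDisk unitDisk :=
  InvOn.bijOn ⟨leftInvOn_moebius_unitDisk ha, leftInvOn_moebius_unitDisk ha⟩
    (mapsTo_moebius_unitDisk ha) (mapsTo_moebius_unitDisk ha)

theorem lintegral_unitDisk_comp_moebius {a : ℂ} (ha : a ∈ unitDisk) (g : ℂ → ℝ≥0∞) :
    ∫⁻ z in unitDisk, ENNReal.ofReal (‖deriv (moebius a) z‖ ^ 2) * g (moebius a z)
      = ∫⁻ ζ in unitDisk, g ζ := by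
  have hbij := bijOn_moebius_unitDisk ha
  conv_rhs => rw [← hbij.image_eq]
  refine (lintegral_image_eq_lintegral_norm_deriv_sq_mul measurableSet_ball (fun z hz => ?_)
    hbij.injOn g).symm
  exact (hasDerivAt_moebius (mem_unitDisk.1 ha) (mem_unitDisk.1 hz)).differentiableAt
    |>.hasDerivAt.hasDerivWithinAt

theorem mul_one_sub_norm_moebius_sq_rpow_le {a z : ℂ} (ha : ‖a‖ < 1) (hz : ‖z‖ < 1) {J B : ℝ}
    (hJ : 0 ≤ J) (hB : (1 - ‖z‖ ^ 2) * √J ≤ B) (p : ℝ) :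
    J * (1 - ‖moebius a z‖ ^ 2) ^ p
      ≤ B ^ 2 * (‖deriv (moebius a) z‖ ^ 2 * (1 - ‖moebius a z‖ ^ 2) ^ (p - 2)) := by
  have hφ : 0 < 1 - ‖moebius a z‖ ^ 2 := by
    nlinarith [norm_moebius_lt_one ha hz, norm_nonneg (moebius a z)]
  have hz2 : 0 ≤ 1 - ‖z‖ ^ 2 := by nlinarith [norm_nonneg z]
  have hJB : J * (1 - ‖z‖ ^ 2) ^ 2 ≤ B ^ 2 :=
    calc J * (1 - ‖z‖ ^ 2) ^ 2 = ((1 - ‖z‖ ^ 2) * √J) ^ 2 := by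
          rw [mul_pow, Real.sq_sqrt hJ]; ring
      _ ≤ B ^ 2 := pow_le_pow_left₀ (mul_nonneg hz2 (Real.sqrt_nonneg J)) hB 2
  calc J * (1 - ‖moebius a z‖ ^ 2) ^ p
      = J * (1 - ‖moebius a z‖ ^ 2) ^ (2 : ℕ) * (1 - ‖moebius a z‖ ^ 2) ^ (p - 2) := by
        rw [mul_assoc, ← Real.rpow_natCast (1 - ‖moebius a z‖ ^ 2) 2, ← Real.rpow_add hφ]
        norm_num
    _ = J * (1 - ‖z‖ ^ 2) ^ 2
          * (‖deriv (moebius a) z‖ ^ 2 * (1 - ‖moebius a z‖ ^ 2) ^ (p - 2)) := by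
        rw [← one_sub_norm_sq_mul_norm_deriv_moebius ha hz]; ring
    _ ≤ _ := by gcongr

theorem lintegral_abs_mul_one_sub_norm_moebius_sq_rpow_le {J : ℂ → ℝ} {B : ℝ}
    (hB : ∀ z ∈ unitDisk, (1 - ‖z‖ ^ 2) * √|J z| ≤ B) (p : ℝ) {a : ℂ} (ha : a ∈ unitDisk) :
    ∫⁻ z in unitDisk, ENNReal.ofReal (|J z| * (1 - ‖moebius a z‖ ^ 2) ^ p)
      ≤ ENNReal.ofReal (B ^ 2) * ∫⁻ ζ in unitDisk, ENNReal.ofReal ((1 - ‖ζ‖ ^ 2) ^ (p - 2)) := by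
  rw [← lintegral_unitDisk_comp_moebius ha (fun ζ => ENNReal.ofReal ((1 - ‖ζ‖ ^ 2) ^ (p - 2))),
    ← lintegral_const_mul' _ _ ENNReal.ofReal_ne_top]
  refine setLIntegral_mono' measurableSet_ball fun z hz => ?_
  rw [← ENNReal.ofReal_mul (sq_nonneg _), ← ENNReal.ofReal_mul (sq_nonneg _)]
  exact ENNReal.ofReal_le_ofReal <| mul_one_sub_norm_moebius_sq_rpow_le (mem_unitDisk.1 ha)
    (mem_unitDisk.1 hz) (abs_nonneg _) (hB z hz) p

theorem integrableOn_mul_one_sub_sq_rpow {q : ℝ} (hq : -1 < q) :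
    IntegrableOn (fun r : ℝ => r * (1 - r ^ 2) ^ q) (Ioc 0 1) := by
  have hq1 : 0 < q + 1 := by linarith
  refine intervalIntegral.integrableOn_deriv_of_nonneg
    (g := fun r => -(1 - r ^ 2) ^ (q + 1) / (2 * (q + 1))) ?_ (fun r hr => ?_) (fun r hr => ?_)
  · exact ((continuousOn_const.sub (continuousOn_pow 2)).rpow_const
      (fun _ _ => Or.inr hq1.le)).neg.div_const _
  · have hpos : 0 < 1 - r ^ 2 := by nlinarith [hr.1, hr.2]
    have h := ((hasDerivAt_pow 2 r).const_sub 1).rpow_const (p := q + 1) (Or.inl hpos.ne')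
    refine (h.fun_neg.div_const (2 * (q + 1))).congr_deriv ?_
    rw [add_sub_cancel_right]
    field_simp
    push_cast
    ring
  · have hpos : 0 < 1 - r ^ 2 := by nlinarith [hr.1, hr.2]
    exact mul_nonneg hr.1.le (Real.rpow_nonneg hpos.le q)

theorem integrableOn_unitDisk_one_sub_norm_sq_rpow {q : ℝ} (hq : -1 < q) :
    IntegrableOn (fun ζ : ℂ => (1 - ‖ζ‖ ^ 2) ^ q) unitDisk := by
  rw [unitDisk, integrableOn_fun_norm_addHaar volume (f := fun r => (1 - r ^ 2) ^ q),
    Complex.finrank_real_complex]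
  simpa using (integrableOn_mul_one_sub_sq_rpow hq).mono_set Ioo_subset_Ioc_self

theorem blochType_subset_QpType_general
    (p : ℝ) (hp : 1 < p) (F : ℂ → ℂ)
    (B : ℝ) (hB : ∀ z ∈ unitDisk, (1 - ‖z‖ ^ 2) * Real.sqrt |jac F z| ≤ B) :
    (∀ a ∈ unitDisk,
      ∫⁻ z in unitDisk, ENNReal.ofReal (|jac F z| * (1 - ‖moebius a z‖ ^ 2) ^ p)
        ≤ ENNReal.ofReal (B ^ 2)
            * ∫⁻ ζ in unitDisk, ENNReal.ofReal ((1 - ‖ζ‖ ^ 2) ^ (p - 2)))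
    ∧ (∫⁻ ζ in unitDisk, ENNReal.ofReal ((1 - ‖ζ‖ ^ 2) ^ (p - 2))) < ⊤ :=
  ⟨fun _ ha => lintegral_abs_mul_one_sub_norm_moebius_sq_rpow_le hB p ha,
    (integrableOn_unitDisk_one_sub_norm_sq_rpow (by linarith)).setLIntegral_lt_top⟩

/-- If `F ∈ 𝔅𝒯`, i.e. `(1-|z|²)√|J_F(z)| ≤ β₂(F)` on `𝔻`, then for every
`a ∈ 𝔻`, `∫_𝔻 |J_F|(1-|φ_a|²)^p dA ≤ β₂(F)² ∫_𝔻 (1-|ζ|²)^{p-2} dA < ∞`; in particular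
`𝔅𝒯 ⊆ 𝒬𝒯_p` for all `p > 1`. -/
theorem blochType_subset_QpType
    (p : ℝ) (hp : 1 < p) (F : ℂ → ℂ) (hF : ContDiffOn ℝ 1 F unitDisk)
    (B : ℝ) (hB : ∀ z ∈ unitDisk, (1 - ‖z‖ ^ 2) * Real.sqrt |jac F z| ≤ B) :
    (∀ a ∈ unitDisk,
      ∫⁻ z in unitDisk, ENNReal.ofReal (|jac F z| * (1 - ‖moebius a z‖ ^ 2) ^ p)
        ≤ ENNReal.ofReal (B ^ 2)
            * ∫⁻ ζ in unitDisk, ENNReal.ofReal ((1 - ‖ζ‖ ^ 2) ^ (p - 2)))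
    ∧ (∫⁻ ζ in unitDisk, ENNReal.ofReal ((1 - ‖ζ‖ ^ 2) ^ (p - 2))) < ⊤ :=
  blochType_subset_QpType_general p hp F B hB
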